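/- For every positive integer n and every real number α, the n×n Hankel determinant det(α·c_{i+j+2} + c_{i+j+3})_{i,j=0}^{n−1} equals (Σ_{j=0}^{n} g_{2j+1}(α)·g_{2j+1}(0)·∏_{ℓ=2j+1}^{2n} T_ℓ) · det(c_{i+j+1})_{i,j=0}^{n−1}. -/

import Mathlib

/-!
Write `c(m,k) = dyckGF T m k` and `w_k = T₀ ⋯ T_{k-1}`. Cutting a path of length `a + b` at
step `a` gives the orthogonality `∑ₖ c(a,k) c(b,k) w_k = c(a+b,0)`. Restricted to odd heights it
factors the Hankel matrix `(c_{i+j+1})` as `E D Eᵀ`, with `E = (c(2i+1,2l+1))` unitriangular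
and `D = diag(w_{2l+1})`. Two steps between odd heights act by a tridiagonal matrix `J`, so the
shifted Hankel matrix is `E D (E P)ᵀ` with `P` the corner of `αJ + J²`, and the ratio of the two
determinants is `det P`. Expanding along the last row,
`det P_{n+1} = det J_{n+1} · det(α + J_{n+1}) + T_{2n+1} T_{2n+2} det P_n`, and the three-term
recurrence of the `g_{2n+1}` gives `det(α + J_n) = g_{2n+1}(α)`.
-/

/-- `dyckGF T n k` is the weighted Dyck path generating function `c(n,k)`:
`c(0,k) = [k = 0]`, `c(n,k) = 0` for `k < 0`, and
`c(n,k) = c(n-1,k-1) + T_k c(n-1,k+1)` for `n ≥ 1`, `k ≥ 0`. -/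
def dyckGF (T : ℕ → ℝ) : ℕ → ℤ → ℝ
  | 0, k => if k = 0 then 1 else 0
  | n+1, k =>
      if k < 0 then 0
      else dyckGF T n (k-1) + T k.toNat * dyckGF T n (k+1)

/-- The polynomials `g_n(α)`: `g_0 = 1`, `g_1 = 1`,
`g_{2n}(α) = α g_{2n-1}(α) + T_{2n-2} g_{2n-2}(α)` and
`g_{2n+1}(α) = g_{2n}(α) + T_{2n-1} g_{2n-1}(α)` for `n ≥ 1`. -/
def gpoly (T : ℕ → ℝ) (α : ℝ) : ℕ → ℝ
  | 0 => 1
  | 1 => 1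
  | n+2 => (if (n+2) % 2 = 0 then α else 1) * gpoly T α (n+1) + T n * gpoly T α n

open Finset Matrix

theorem sum_range_two_mul_eq_sum_odd {M : Type*} [AddCommMonoid M] {f : ℕ → M}
    (hf : ∀ l, f (2 * l) = 0) (n : ℕ) :
    ∑ k ∈ range (2 * n), f k = ∑ l ∈ range n, f (2 * l + 1) := by
  induction n with
  | zero => simp
  | succ n ih => rw [mul_add_one, sum_range_succ, sum_range_succ, hf, ih, sum_range_succ, add_zero]

theorem Matrix.det_add_single_last_last {R : Type*} [CommRing R] {n : ℕ}
    (X : Matrix (Fin (n + 1)) (Fin (n + 1)) R) (c : R) :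
    (X + single (Fin.last n) (Fin.last n) c).det =
      X.det + c * (X.submatrix Fin.castSucc Fin.castSucc).det := by
  have hminor (f : Fin n → Fin (n + 1)) : (X + single (Fin.last n) (Fin.last n) c).submatrix
      Fin.castSucc f = X.submatrix Fin.castSucc f := by
    ext a b
    simp [(Fin.castSucc_lt_last a).ne']
  rw [det_succ_row _ (Fin.last n), det_succ_row X (Fin.last n)]
  simp only [Fin.succAbove_last, hminor, Matrix.add_apply, single_apply, true_and, mul_add,
    add_mul, sum_add_distrib, mul_ite, mul_zero, ite_mul, zero_mul, sum_ite_eq, mem_univ, if_true]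
  rw [← two_mul, pow_mul, neg_one_sq, one_pow]
  ring

theorem Matrix.det_succ_succ_of_last_row_col {R : Type*} [CommRing R] {n : ℕ}
    (M : Matrix (Fin (n + 2)) (Fin (n + 2)) R)
    (hrow : ∀ j : Fin n, M (Fin.last _) j.castSucc.castSucc = 0)
    (hcol : ∀ i : Fin n, M i.castSucc.castSucc (Fin.last _) = 0) :
    M.det = M (Fin.last _) (Fin.last _) * (M.submatrix Fin.castSucc Fin.castSucc).det -
      M (Fin.last _) (Fin.last n).castSucc * M (Fin.last n).castSucc (Fin.last _) *
        (M.submatrix (Fin.castSucc ∘ Fin.castSucc) (Fin.castSucc ∘ Fin.castSucc)).det := by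
  have hcols : (Fin.last n).castSucc.succAbove ∘ Fin.castSucc =
      (Fin.castSucc ∘ Fin.castSucc : Fin n → Fin (n + 2)) :=
    funext fun j => Fin.succAbove_castSucc_of_lt _ _ (Fin.castSucc_lt_last j)
  rw [det_succ_row _ (Fin.last _), Fin.sum_univ_castSucc, Fin.sum_univ_castSucc]
  simp only [hrow, mul_zero, zero_mul, sum_const_zero, zero_add, Fin.succAbove_last]
  rw [det_succ_column _ (Fin.last n), Fin.sum_univ_castSucc]
  simp only [Nat.succ_eq_add_one, Fin.val_last, Fin.val_castSucc, odd_add_one_self,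
    Odd.neg_one_pow, neg_mul, one_mul, submatrix_apply, ne_eq, Fin.castSucc_ne_last,
    not_false_eq_true, Fin.succAbove_ne_last_last, hcol, mul_zero, Fin.succAbove_last,
    submatrix_submatrix, hcols, zero_mul, sum_const_zero, Even.add_self, Even.neg_pow, one_pow,
    zero_add]
  ring

section

variable {T : ℕ → ℝ}

theorem dyckGF_of_neg {m : ℕ} {k : ℤ} (hk : k < 0) : dyckGF T m k = 0 := by
  cases m with
  | zero => simp [dyckGF, hk.ne]
  | succ m => simp [dyckGF, hk]

theorem dyckGF_succ_natCast (m k : ℕ) :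
    dyckGF T (m + 1) k = dyckGF T m (k - 1) + T k * dyckGF T m (k + 1) := by
  simp [dyckGF]

theorem dyckGF_of_lt {m : ℕ} {k : ℤ} (hk : (m : ℤ) < k) : dyckGF T m k = 0 := by
  induction m generalizing k with
  | zero => exact if_neg (by omega)
  | succ m ih =>
    lift k to ℕ using (by omega)
    rw [dyckGF_succ_natCast, ih (by omega), ih (by omega)]
    ring

theorem dyckGF_self (m : ℕ) : dyckGF T m m = 1 := by
  induction m with
  | zero => simp [dyckGF]
  | succ m ih =>
    rw [dyckGF_succ_natCast, dyckGF_of_lt (k := (m + 1 : ℕ) + 1) (by omega)]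
    simpa using ih

theorem dyckGF_of_emod_two_ne {m : ℕ} {k : ℤ} (hk : (m : ℤ) % 2 ≠ k % 2) :
    dyckGF T m k = 0 := by
  induction m generalizing k with
  | zero => exact if_neg (by omega)
  | succ m ih =>
    rcases lt_or_ge k 0 with hneg | hnn
    · exact dyckGF_of_neg hneg
    lift k to ℕ using hnn
    rw [dyckGF_succ_natCast, ih (by omega), ih (by omega)]
    ring

variable (T) in
noncomputable def dyckWeight (k : ℕ) : ℝ := ∏ l ∈ range k, T l

theorem dyckWeight_succ (k : ℕ) : dyckWeight T (k + 1) = dyckWeight T k * T k :=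
  prod_range_succ _ _

theorem sum_dyckGF_succ_mul (a : ℕ) {b N : ℕ} (hb : b < N) :
    ∑ k ∈ range N, dyckGF T (a + 1) k * dyckGF T b k * dyckWeight T k =
      ∑ k ∈ range N, dyckWeight T (k + 1) *
        (dyckGF T a k * dyckGF T b (k + 1) + dyckGF T a (k + 1) * dyckGF T b k) := by
  obtain ⟨N, rfl⟩ : ∃ N', N = N' + 1 := ⟨N - 1, by omega⟩
  have hdown : ∑ k ∈ range (N + 1), dyckGF T a ((k : ℤ) - 1) * dyckGF T b k * dyckWeight T k =
      ∑ k ∈ range (N + 1), dyckWeight T (k + 1) * (dyckGF T a k * dyckGF T b (k + 1)) := by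
    rw [sum_range_succ', sum_range_succ, dyckGF_of_neg (by norm_num),
      dyckGF_of_lt (k := ((N : ℕ) : ℤ) + 1) (by omega)]
    simp only [Nat.cast_add, Nat.cast_one, add_sub_cancel_right, mul_zero, zero_mul, add_zero]
    exact sum_congr rfl fun k _ => by ring
  simp only [dyckGF_succ_natCast, add_mul, sum_add_distrib, hdown, mul_add, dyckWeight_succ]
  congr 1
  refine sum_congr rfl fun k _ => ?_
  ring

theorem sum_dyckGF_succ_mul_eq_sum_mul_succ {a b N : ℕ} (ha : a < N) (hb : b < N) :
    ∑ k ∈ range N, dyckGF T (a + 1) k * dyckGF T b k * dyckWeight T k =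
      ∑ k ∈ range N, dyckGF T a k * dyckGF T (b + 1) k * dyckWeight T k := by
  have hsymm := sum_dyckGF_succ_mul (T := T) b ha
  simp only [mul_comm (dyckGF T a _) (dyckGF T (b + 1) _)]
  rw [sum_dyckGF_succ_mul a hb, hsymm]
  refine sum_congr rfl fun k _ => ?_
  ring

theorem sum_dyckGF_mul_dyckGF {a b N : ℕ} (h : a + b < N) :
    ∑ k ∈ range N, dyckGF T a k * dyckGF T b k * dyckWeight T k = dyckGF T (a + b) 0 := by
  induction a generalizing b with
  | zero =>
    rw [sum_eq_single 0 (fun k _ hk => by simp [dyckGF, hk])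
      (fun h => absurd (mem_range.2 (by omega)) h)]
    simp [dyckGF, dyckWeight]
  | succ a ih =>
    rw [sum_dyckGF_succ_mul_eq_sum_mul_succ (by omega) (by omega), ih (by omega),
      Nat.add_right_comm, ← add_assoc]

theorem sum_dyckGF_odd_mul_dyckGF_odd (i j : ℕ) {N : ℕ} (hi : i < N) :
    ∑ l ∈ range N, dyckGF T (2 * i + 1) (2 * l + 1) * dyckGF T (2 * j + 1) (2 * l + 1) *
      dyckWeight T (2 * l + 1) = dyckGF T (2 * (i + j + 1)) 0 := by
  set f : ℕ → ℝ := fun k => dyckGF T (2 * i + 1) k * dyckGF T (2 * j + 1) k * dyckWeight T k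
  have hf_even (l : ℕ) : f (2 * l) = 0 := by
    simp only [f, dyckGF_of_emod_two_ne (m := 2 * i + 1) (k := ((2 * l : ℕ) : ℤ)) (by omega),
      zero_mul]
  have hf_large : ∀ l ≥ N, f (2 * l + 1) = 0 := fun l hl => by
    simp only [f, dyckGF_of_lt (m := 2 * i + 1) (k := ((2 * l + 1 : ℕ) : ℤ)) (by omega),
      zero_mul]
  calc _ = ∑ l ∈ range N, f (2 * l + 1) := by simp [f]
    _ = ∑ l ∈ range (N + i + j + 1), f (2 * l + 1) :=
      (eventually_constant_sum hf_large (by omega)).symm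
    _ = ∑ k ∈ range (2 * (N + i + j + 1)), f k := (sum_range_two_mul_eq_sum_odd hf_even _).symm
    _ = dyckGF T (2 * (i + j + 1)) 0 := by
      rw [sum_dyckGF_mul_dyckGF (by omega)]
      congr 1
      ring

variable (T) in
/-- Two steps of a path from odd height `2l+1` to odd height `2k+1`, weighted as in `dyckGF`
(see `sum_dyckGF_odd_mul_oddJacobi`). -/
noncomputable def oddJacobi (l k : ℕ) : ℝ :=
  if l = k + 1 then T (2 * k + 1) * T (2 * k + 2)
  else if l = k then T (2 * k) + T (2 * k + 1)
  else if l + 1 = k then 1 else 0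

@[simp] theorem oddJacobi_succ_self (k : ℕ) :
    oddJacobi T (k + 1) k = T (2 * k + 1) * T (2 * k + 2) := by
  simp [oddJacobi]

@[simp] theorem oddJacobi_self (k : ℕ) : oddJacobi T k k = T (2 * k) + T (2 * k + 1) := by
  simp [oddJacobi]

@[simp] theorem oddJacobi_self_succ (k : ℕ) : oddJacobi T k (k + 1) = 1 := by
  simp only [oddJacobi]
  rw [if_neg (by omega), if_neg (by omega), if_pos trivial]

theorem oddJacobi_of_lt {l k : ℕ} (h : l + 1 < k) : oddJacobi T l k = 0 := by
  simp only [oddJacobi]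
  rw [if_neg (by omega), if_neg (by omega), if_neg (by omega)]

theorem oddJacobi_of_gt {l k : ℕ} (h : k + 1 < l) : oddJacobi T l k = 0 := by
  simp only [oddJacobi]
  rw [if_neg (by omega), if_neg (by omega), if_neg (by omega)]

theorem dyckGF_add_two_odd (m k : ℕ) :
    dyckGF T (m + 2) (2 * k + 1) = dyckGF T m (2 * k - 1) +
      (T (2 * k) + T (2 * k + 1)) * dyckGF T m (2 * k + 1) +
        T (2 * k + 1) * T (2 * k + 2) * dyckGF T m (2 * k + 3) := by
  have h1 : (2 * k + 1 : ℤ) = ((2 * k + 1 : ℕ) : ℤ) := by push_cast; ring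
  have h2 : ((2 * k + 1 : ℕ) : ℤ) - 1 = ((2 * k : ℕ) : ℤ) := by push_cast; ring
  have h3 : ((2 * k + 1 : ℕ) : ℤ) + 1 = ((2 * k + 2 : ℕ) : ℤ) := by push_cast; ring
  rw [h1, dyckGF_succ_natCast (m + 1), h2, h3, dyckGF_succ_natCast, dyckGF_succ_natCast]
  push_cast
  ring_nf

theorem sum_dyckGF_odd_mul_oddJacobi {m N : ℕ} (hm : m ≤ 2 * N) (k : ℕ) :
    ∑ l ∈ range N, dyckGF T m (2 * l + 1) * oddJacobi T l k = dyckGF T (m + 2) (2 * k + 1) := by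
  set F : ℕ → ℝ := fun l => dyckGF T m (2 * l + 1) * oddJacobi T l k
  have hF_high : ∀ l ≥ N, F l = 0 := fun l hl => by
    simp only [F, dyckGF_of_lt (m := m) (k := 2 * l + 1) (by omega), zero_mul]
  have hF_band : ∀ l ≥ k + 2, F l = 0 := fun l hl => by
    simp only [F, oddJacobi_of_gt (by omega : k + 1 < l), mul_zero]
  calc ∑ l ∈ range N, F l = ∑ l ∈ range (N + (k + 2)), F l :=
        (eventually_constant_sum hF_high (by omega)).symm
    _ = ∑ l ∈ range (k + 2), F l := eventually_constant_sum hF_band (by omega)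
    _ = _ := by
      rw [dyckGF_add_two_odd]
      cases k with
      | zero => simp [F, sum_range_succ, dyckGF_of_neg, mul_comm]
      | succ k =>
        rw [sum_range_succ, sum_range_succ, sum_range_succ,
          sum_eq_zero fun l hl => by
            simp [F, oddJacobi_of_lt (by have := mem_range.1 hl; omega : l + 1 < k + 1)]]
        simp only [F, oddJacobi_succ_self, oddJacobi_self, oddJacobi_self_succ]
        push_cast
        ring_nf

variable (T) in
noncomputable def oddDyckMatrix (n s : ℕ) : Matrix (Fin n) (Fin n) ℝ :=
  of fun j l => dyckGF T (2 * ((j : ℕ) + s) + 1) (2 * ((l : ℕ) : ℤ) + 1)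

variable (T) in
noncomputable def oddWeightMatrix (n : ℕ) : Matrix (Fin n) (Fin n) ℝ :=
  diagonal fun l => dyckWeight T (2 * l + 1)

theorem det_oddDyckMatrix_zero (n : ℕ) : (oddDyckMatrix T n 0).det = 1 := by
  have hlower : (oddDyckMatrix T n 0).IsLowerTriangular := fun i j (hij : i < j) =>
    dyckGF_of_lt (by simp only [add_zero]; push_cast; omega)
  rw [det_of_isLowerTriangular _ hlower]
  refine prod_eq_one fun i _ => ?_
  simpa [oddDyckMatrix] using dyckGF_self (T := T) (2 * i + 1)

theorem oddDyckMatrix_mul_oddWeightMatrix_mul_transpose (n s : ℕ) :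
    oddDyckMatrix T n 0 * oddWeightMatrix T n * (oddDyckMatrix T n s)ᵀ =
      of fun i j : Fin n => dyckGF T (2 * ((i : ℕ) + j + s + 1)) 0 := by
  ext i j
  rw [mul_apply]
  simp only [oddWeightMatrix, mul_diagonal, oddDyckMatrix, transpose_apply, of_apply, add_zero]
  rw [Fin.sum_univ_eq_sum_range (fun l => dyckGF T (2 * i + 1) (2 * (l : ℤ) + 1) *
    dyckWeight T (2 * l + 1) * dyckGF T (2 * (j + s) + 1) (2 * (l : ℤ) + 1)) n]
  simp only [mul_right_comm _ (dyckWeight T _)]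
  rw [sum_dyckGF_odd_mul_dyckGF_odd _ _ i.isLt]
  congr 1
  ring

variable (T) in
noncomputable def oddJacobiMatrix (n : ℕ) : Matrix (Fin n) (Fin n) ℝ :=
  of fun l k => oddJacobi T l k

variable (T) in
/-- The `n × n` corner of `α J + J²` for the infinite tridiagonal matrix `J = oddJacobi T`;
the inner sum may stop at `n` because `J l m = 0` for `m > l + 1`. -/
noncomputable def jacobiQuadratic (α : ℝ) (n : ℕ) : Matrix (Fin n) (Fin n) ℝ :=
  of fun l k => α * oddJacobi T l k + ∑ m ∈ range (n + 1), oddJacobi T l m * oddJacobi T m k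

theorem oddDyckMatrix_mul_jacobiQuadratic (α : ℝ) (n : ℕ) :
    oddDyckMatrix T n 0 * jacobiQuadratic T α n =
      α • oddDyckMatrix T n 1 + oddDyckMatrix T n 2 := by
  ext j k
  have hrow (r : ℕ) (hr : r ≤ 2 * n) (m : ℕ) :
      ∑ l : Fin n, dyckGF T r (2 * ((l : ℕ) : ℤ) + 1) * oddJacobi T l m =
        dyckGF T (r + 2) (2 * m + 1) := by
    rw [Fin.sum_univ_eq_sum_range (fun l => dyckGF T r (2 * (l : ℤ) + 1) * oddJacobi T l m),
      sum_dyckGF_odd_mul_oddJacobi hr]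
  simp only [mul_apply, oddDyckMatrix, jacobiQuadratic, of_apply, Matrix.add_apply,
    Matrix.smul_apply, smul_eq_mul, add_zero, mul_add, sum_add_distrib, mul_sum]
  rw [sum_comm]
  simp only [mul_left_comm _ α, ← mul_assoc _ (oddJacobi T _ _)]
  simp only [← mul_sum, ← sum_mul]
  rw [hrow _ (by omega), sum_congr rfl fun m _ => by rw [hrow _ (by omega)],
    sum_dyckGF_odd_mul_oddJacobi (by omega)]

theorem gpoly_odd_add_two (α : ℝ) (n : ℕ) :
    gpoly T α (2 * (n + 2) + 1) = (α + T (2 * n + 2) + T (2 * n + 3)) * gpoly T α (2 * n + 3) -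
      T (2 * n + 1) * T (2 * n + 2) * gpoly T α (2 * n + 1) := by
  have h5 : gpoly T α (2 * n + 5) =
      gpoly T α (2 * n + 4) + T (2 * n + 3) * gpoly T α (2 * n + 3) := by
    rw [gpoly, if_neg (by omega), one_mul]
  have h4 : gpoly T α (2 * n + 4) =
      α * gpoly T α (2 * n + 3) + T (2 * n + 2) * gpoly T α (2 * n + 2) := by
    rw [gpoly, if_pos (by omega)]
  have h3 : gpoly T α (2 * n + 3) =
      gpoly T α (2 * n + 2) + T (2 * n + 1) * gpoly T α (2 * n + 1) := by
    rw [gpoly, if_neg (by omega), one_mul]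
  rw [show 2 * (n + 2) + 1 = 2 * n + 5 by ring]
  linear_combination h5 + h4 - T (2 * n + 2) * h3

theorem smul_one_add_oddJacobiMatrix_apply (α : ℝ) {n : ℕ} (i j : Fin n) :
    (α • 1 + oddJacobiMatrix T n) i j = (if (i : ℕ) = j then α else 0) + oddJacobi T i j := by
  simp [oddJacobiMatrix, one_apply, Fin.ext_iff]

theorem submatrix_castSucc_smul_one_add_oddJacobiMatrix (α : ℝ) (n : ℕ) :
    (α • 1 + oddJacobiMatrix T (n + 1)).submatrix Fin.castSucc Fin.castSucc =
      α • 1 + oddJacobiMatrix T n := by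
  ext i j
  simp [oddJacobiMatrix, one_apply]

theorem det_smul_one_add_oddJacobiMatrix (α : ℝ) :
    ∀ n, (α • 1 + oddJacobiMatrix T n).det = gpoly T α (2 * n + 1)
  | 0 => by simp [gpoly]
  | 1 => by simp [oddJacobiMatrix, gpoly, add_assoc]
  | n + 2 => by
    rw [det_succ_succ_of_last_row_col, ← submatrix_submatrix,
      submatrix_castSucc_smul_one_add_oddJacobiMatrix,
      submatrix_castSucc_smul_one_add_oddJacobiMatrix,
      det_smul_one_add_oddJacobiMatrix α n, det_smul_one_add_oddJacobiMatrix α (n + 1),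
      gpoly_odd_add_two]
    · simp only [smul_one_add_oddJacobiMatrix_apply, Fin.val_last, Fin.val_castSucc,
        oddJacobi_self, oddJacobi_succ_self, oddJacobi_self_succ, if_true,
        show n + 1 ≠ n by omega, show n ≠ n + 1 by omega, if_false]
      ring_nf
    · intro j
      rw [smul_one_add_oddJacobiMatrix_apply, if_neg (by simp; omega),
        oddJacobi_of_gt (by simp), add_zero]
    · intro i
      rw [smul_one_add_oddJacobiMatrix_apply, if_neg (by simp; omega),
        oddJacobi_of_lt (by simp), add_zero]

theorem oddJacobi_mul_oddJacobi_of_succ {n : ℕ} (l k : Fin (n + 1)) :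
    oddJacobi T l (n + 1) * oddJacobi T (n + 1) k =
      single (Fin.last n) (Fin.last n) (T (2 * n + 1) * T (2 * n + 2)) l k := by
  rcases Fin.eq_castSucc_or_eq_last l with ⟨l, rfl⟩ | rfl
  · simp [oddJacobi_of_lt (show (l : ℕ) + 1 < n + 1 by omega), (Fin.castSucc_lt_last l).ne']
  rcases Fin.eq_castSucc_or_eq_last k with ⟨k, rfl⟩ | rfl
  · simp [oddJacobi_of_gt (show (k : ℕ) + 1 < n + 1 by omega), (Fin.castSucc_lt_last k).ne']
  · simp

theorem oddJacobiMatrix_mul_smul_one_add_apply (α : ℝ) {n : ℕ} (l k : Fin n) :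
    (oddJacobiMatrix T n * (α • 1 + oddJacobiMatrix T n)) l k =
      α * oddJacobi T l k + ∑ m ∈ range n, oddJacobi T l m * oddJacobi T m k := by
  rw [Matrix.mul_add, Matrix.mul_smul, Matrix.mul_one]
  simp only [Matrix.add_apply, Matrix.smul_apply, smul_eq_mul, mul_apply, oddJacobiMatrix, of_apply]
  rw [Fin.sum_univ_eq_sum_range (fun m => oddJacobi T l m * oddJacobi T m k)]

theorem jacobiQuadratic_succ (α : ℝ) (n : ℕ) :
    jacobiQuadratic T α (n + 1) =
      oddJacobiMatrix T (n + 1) * (α • 1 + oddJacobiMatrix T (n + 1)) +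
        single (Fin.last n) (Fin.last n) (T (2 * n + 1) * T (2 * n + 2)) := by
  ext l k
  rw [Matrix.add_apply, oddJacobiMatrix_mul_smul_one_add_apply,
    ← oddJacobi_mul_oddJacobi_of_succ, jacobiQuadratic, of_apply, sum_range_succ]
  ring

theorem submatrix_castSucc_oddJacobiMatrix_mul_smul_one_add (α : ℝ) (n : ℕ) :
    (oddJacobiMatrix T (n + 1) * (α • 1 + oddJacobiMatrix T (n + 1))).submatrix
      Fin.castSucc Fin.castSucc = jacobiQuadratic T α n := by
  ext l k
  rw [submatrix_apply, oddJacobiMatrix_mul_smul_one_add_apply]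
  rfl

theorem det_jacobiQuadratic (α : ℝ) (n : ℕ) :
    (jacobiQuadratic T α n).det = ∑ j ∈ range (n + 1),
      gpoly T α (2 * j + 1) * gpoly T 0 (2 * j + 1) *
        ∏ ℓ ∈ Ico (2 * j + 1) (2 * n + 1), T ℓ := by
  induction n with
  | zero => simp [gpoly]
  | succ n ih =>
    have hJ : (oddJacobiMatrix T (n + 1)).det = gpoly T 0 (2 * (n + 1) + 1) := by
      simpa using det_smul_one_add_oddJacobiMatrix (T := T) 0 (n + 1)
    have hterm (j : ℕ) (hj : j ∈ range (n + 1)) :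
        gpoly T α (2 * j + 1) * gpoly T 0 (2 * j + 1) *
            ∏ ℓ ∈ Ico (2 * j + 1) (2 * (n + 1) + 1), T ℓ =
          gpoly T α (2 * j + 1) * gpoly T 0 (2 * j + 1) *
            (∏ ℓ ∈ Ico (2 * j + 1) (2 * n + 1), T ℓ) * (T (2 * n + 1) * T (2 * n + 2)) := by
      rw [mem_range] at hj
      rw [show 2 * (n + 1) + 1 = 2 * n + 1 + 1 + 1 by ring, prod_Ico_succ_top (by omega),
        prod_Ico_succ_top (by omega)]
      ring
    rw [jacobiQuadratic_succ, det_add_single_last_last,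
      submatrix_castSucc_oddJacobiMatrix_mul_smul_one_add, det_mul, hJ,
      det_smul_one_add_oddJacobiMatrix, ih, sum_range_succ _ (n + 1), Ico_self, prod_empty,
      mul_one, sum_congr rfl hterm, ← sum_mul]
    ring

end

theorem hankel_shifted_two_term_dyck_odd_general (T : ℕ → ℝ)
    (n : ℕ) (α : ℝ) :
    Matrix.det (Matrix.of fun i j : Fin n =>
        α * dyckGF T (2 * ((i : ℕ) + (j : ℕ) + 2)) 0
          + dyckGF T (2 * ((i : ℕ) + (j : ℕ) + 3)) 0)
      = (∑ j ∈ Finset.range (n + 1),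
            gpoly T α (2 * j + 1) * gpoly T 0 (2 * j + 1)
              * ∏ ℓ ∈ Finset.Ico (2 * j + 1) (2 * n + 1), T ℓ)
        * Matrix.det (Matrix.of fun i j : Fin n =>
            dyckGF T (2 * ((i : ℕ) + (j : ℕ) + 1)) 0) := by
  have hankel₁ : (of fun i j : Fin n => dyckGF T (2 * ((i : ℕ) + (j : ℕ) + 1)) 0) =
      oddDyckMatrix T n 0 * oddWeightMatrix T n * (oddDyckMatrix T n 0)ᵀ := by
    rw [oddDyckMatrix_mul_oddWeightMatrix_mul_transpose]
  have hankel₂ : (of fun i j : Fin n => α * dyckGF T (2 * ((i : ℕ) + (j : ℕ) + 2)) 0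
        + dyckGF T (2 * ((i : ℕ) + (j : ℕ) + 3)) 0) =
      oddDyckMatrix T n 0 * oddWeightMatrix T n *
        (oddDyckMatrix T n 0 * jacobiQuadratic T α n)ᵀ := by
    rw [oddDyckMatrix_mul_jacobiQuadratic, transpose_add, transpose_smul, Matrix.mul_add,
      Matrix.mul_smul, oddDyckMatrix_mul_oddWeightMatrix_mul_transpose,
      oddDyckMatrix_mul_oddWeightMatrix_mul_transpose]
    rfl
  rw [hankel₁, hankel₂]
  simp only [det_mul, det_transpose, det_oddDyckMatrix_zero, det_jacobiQuadratic]
  ring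

/-- Eq. (3.4): for `n ≥ 1` and real `α`,
`det(α c_{i+j+2} + c_{i+j+3})_{i,j=0}^{n-1}
  = (∑_{j=0}^{n} g_{2j+1}(α) g_{2j+1}(0) ∏_{ℓ=2j+1}^{2n} T_ℓ) · det(c_{i+j+1})_{i,j=0}^{n-1}`. -/
theorem hankel_shifted_two_term_dyck_odd (T : ℕ → ℝ) (hT : ∀ n, T n ≠ 0)
    (n : ℕ) (hn : 0 < n) (α : ℝ) :
    Matrix.det (Matrix.of fun i j : Fin n =>
        α * dyckGF T (2 * ((i : ℕ) + (j : ℕ) + 2)) 0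
          + dyckGF T (2 * ((i : ℕ) + (j : ℕ) + 3)) 0)
      = (∑ j ∈ Finset.range (n + 1),
            gpoly T α (2 * j + 1) * gpoly T 0 (2 * j + 1)
              * ∏ ℓ ∈ Finset.Ico (2 * j + 1) (2 * n + 1), T ℓ)
        * Matrix.det (Matrix.of fun i j : Fin n =>
            dyckGF T (2 * ((i : ℕ) + (j : ℕ) + 1)) 0) :=
  hankel_shifted_two_term_dyck_odd_general T n α
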